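/- arXiv:2402.03314 — 5 statements merged into one kernel-verified Lean document; each statement's English description precedes it below -/
import Mathlib

section
/- If T_h : Q → Q is a bounded linear idempotent operator (T_h^2 = T_h) on a Hilbert space Q with T_h ≠ 0 and T_h ≠ I, then for every u ∈ Q and every p_h in the range of T_h, ‖u - T_h u‖ ≤ ‖T_h‖ · ‖u - p_h‖. -/
/-!
Write `x = b + k` with `b = x - T x ∈ ker T` and `k = T x ∈ range T`. The test vector
`z = ⟪b, k⟫ • b - ‖b‖² • k` is orthogonal to `b` and satisfies `T z = -‖b‖² • k`, and the
Cauchy–Schwarz-type estimate `‖z‖ ≤ ‖b‖ ‖k‖ ‖b + k‖` turns `‖T z‖ ≤ ‖T‖ ‖z‖` into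
`‖b‖ ≤ ‖T‖ ‖x‖`. Applied to `x = u - p`, with `T p = p`, this is the theorem.
-/

open RealInnerProductSpace

theorem IsIdempotentElem.one_le_norm {R : Type*} [NonUnitalNormedRing R] {a : R}
    (ha : IsIdempotentElem a) (h0 : a ≠ 0) : 1 ≤ ‖a‖ := by
  have hpos : 0 < ‖a‖ := norm_pos_iff.mpr h0
  refine (le_mul_iff_one_le_left hpos).mp ?_
  calc ‖a‖ = ‖a * a‖ := by rw [ha.eq]
    _ ≤ ‖a‖ * ‖a‖ := norm_mul_le a a

theorem norm_inner_smul_sub_norm_sq_smul_le {E : Type*} [NormedAddCommGroup E]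
    [InnerProductSpace ℝ E] (b k : E) :
    ‖⟪b, k⟫ • b - ‖b‖ ^ 2 • k‖ ≤ ‖b‖ * ‖k‖ * ‖b + k‖ := by
  refine le_of_sq_le_sq ?_ (by positivity)
  have hk : ⟪k, k⟫ = ‖k‖ ^ 2 := real_inner_self_eq_norm_sq k
  have hb : ⟪b, b⟫ = ‖b‖ ^ 2 := real_inner_self_eq_norm_sq b
  have hbk : ⟪k, b⟫ = ⟪b, k⟫ := real_inner_comm b k
  rw [mul_pow, mul_pow, ← real_inner_self_eq_norm_sq, ← real_inner_self_eq_norm_sq (b + k)]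
  simp only [inner_sub_left, inner_sub_right, inner_add_left, inner_add_right,
    real_inner_smul_left, real_inner_smul_right, hk, hb, hbk]
  nlinarith [sq_nonneg (⟪b, k⟫ + ‖k‖ ^ 2), sq_nonneg ‖b‖]

theorem ContinuousLinearMap.norm_sub_apply_le_of_isIdempotentElem {E : Type*}
    [NormedAddCommGroup E] [InnerProductSpace ℝ E] {T : E →L[ℝ] E}
    (hT : IsIdempotentElem T) (h0 : T ≠ 0) (x : E) : ‖x - T x‖ ≤ ‖T‖ * ‖x‖ := by
  have hTT : T (T x) = T x := congrArg (· x) hT.eq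
  set b := x - T x
  set k := T x
  have hbk : b + k = x := sub_add_cancel x k
  have hTz : T (⟪b, k⟫ • b - ‖b‖ ^ 2 • k) = -(‖b‖ ^ 2 • k) := by
    simp [b, k, hTT]
  have hkey : ‖b‖ * ‖k‖ * ‖b‖ ≤ ‖b‖ * ‖k‖ * (‖T‖ * ‖x‖) :=
    calc ‖b‖ * ‖k‖ * ‖b‖ = ‖T (⟪b, k⟫ • b - ‖b‖ ^ 2 • k)‖ := by
          rw [hTz, norm_neg, norm_smul, norm_pow, norm_norm]; ring
      _ ≤ ‖T‖ * ‖⟪b, k⟫ • b - ‖b‖ ^ 2 • k‖ := T.le_opNorm _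
      _ ≤ ‖T‖ * (‖b‖ * ‖k‖ * ‖b + k‖) := by
          gcongr; exact norm_inner_smul_sub_norm_sq_smul_le b k
      _ = ‖b‖ * ‖k‖ * (‖T‖ * ‖x‖) := by rw [hbk]; ring
  rcases eq_or_ne b 0 with hb | hb
  · rw [hb, norm_zero]; positivity
  rcases eq_or_ne k 0 with hk | hk
  · rw [← hbk, hk, add_zero]
    exact le_mul_of_one_le_left (norm_nonneg b) (hT.one_le_norm h0)
  have hbk_pos : 0 < ‖b‖ * ‖k‖ := mul_pos (norm_pos_iff.mpr hb) (norm_pos_iff.mpr hk)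
  exact le_of_mul_le_mul_left hkey hbk_pos

theorem projection_error_bound_general {Q : Type*} [NormedAddCommGroup Q]
    [InnerProductSpace ℝ Q]
    (T : Q →L[ℝ] Q) (hidem : T.comp T = T)
    (h0 : T ≠ 0)
    (u p : Q) (hp : p ∈ Set.range T) :
    ‖u - T u‖ ≤ ‖T‖ * ‖u - p‖ := by
  obtain ⟨y, rfl⟩ := hp
  have hTp : T (T y) = T y := congrArg (· y) hidem
  have hsplit : u - T u = (u - T y) - T (u - T y) := by
    rw [map_sub, hTp]; abel
  rw [hsplit]
  exact T.norm_sub_apply_le_of_isIdempotentElem hidem h0 (u - T y)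

theorem projection_error_bound {Q : Type*} [NormedAddCommGroup Q]
    [InnerProductSpace ℝ Q] [CompleteSpace Q]
    (T : Q →L[ℝ] Q) (hidem : T.comp T = T)
    (h0 : T ≠ 0) (h1 : T ≠ ContinuousLinearMap.id ℝ Q)
    (u p : Q) (hp : p ∈ Set.range T) :
    ‖u - T u‖ ≤ ‖T‖ * ‖u - p‖ :=
  projection_error_bound_general T hidem h0 u p hp
end

section
/- Let u ∈ H^1_0(0,1) and let ‖u‖_{*}^2 = ε^2 ∫_0^1 (u')^2 + ∫_0^1 u^2 − (∫_0^1 u)^2 and ‖u‖_{*,h}^2 = ε^2 ∫_0^1 (u')^2 + |u|_{*,h}^2 on a uniform partition of mesh h. Then ‖u‖_{*,h}^2 ≤ ‖u‖_{*}^2 ≤ ‖u‖_{*,h}^2 + c_p^2 h^2 ∫_0^1 (u')^2, where c_p is the constant of the mean-zero Poincaré inequality on a subinterval. -/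
open intervalIntegral MeasureTheory

theorem optimal_norms_comparison (ε : ℝ) (hε : 0 < ε)
    (n : ℕ) (hn : 0 < n) (h : ℝ) (hh : h = 1 / n)
    (cp : ℝ) (hcp : 0 ≤ cp)
    (hpoin : ∀ (w w' : ℝ → ℝ) (i : ℕ), i < n →
      (∀ x ∈ Set.Icc ((i : ℝ) * h) (((i : ℝ) + 1) * h),
        HasDerivWithinAt w (w' x) (Set.Icc ((i : ℝ) * h) (((i : ℝ) + 1) * h)) x) →
      ContinuousOn w' (Set.Icc ((i : ℝ) * h) (((i : ℝ) + 1) * h)) →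
      (∫ x in ((i : ℝ) * h)..(((i : ℝ) + 1) * h), w x) = 0 →
      (∫ x in ((i : ℝ) * h)..(((i : ℝ) + 1) * h), (w x) ^ 2)
        ≤ cp ^ 2 * h ^ 2 * ∫ x in ((i : ℝ) * h)..(((i : ℝ) + 1) * h), (w' x) ^ 2)
    (u u' : ℝ → ℝ)
    (hu : ∀ x ∈ Set.Icc (0:ℝ) 1, HasDerivWithinAt u (u' x) (Set.Icc 0 1) x)
    (hu'c : ContinuousOn u' (Set.Icc 0 1))
    (hu0 : u 0 = 0) (hu1 : u 1 = 0) :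
    (ε ^ 2 * ∫ x in (0:ℝ)..1, (u' x) ^ 2)
        + ((1 / h) * ∑ i ∈ Finset.range n,
            (∫ x in ((i : ℝ) * h)..(((i : ℝ) + 1) * h), u x) ^ 2
          - (∫ x in (0:ℝ)..1, u x) ^ 2)
      ≤ (ε ^ 2 * ∫ x in (0:ℝ)..1, (u' x) ^ 2)
          + (∫ x in (0:ℝ)..1, (u x) ^ 2) - (∫ x in (0:ℝ)..1, u x) ^ 2 ∧
    (ε ^ 2 * ∫ x in (0:ℝ)..1, (u' x) ^ 2)
        + (∫ x in (0:ℝ)..1, (u x) ^ 2) - (∫ x in (0:ℝ)..1, u x) ^ 2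
      ≤ (ε ^ 2 * ∫ x in (0:ℝ)..1, (u' x) ^ 2)
          + ((1 / h) * ∑ i ∈ Finset.range n,
              (∫ x in ((i : ℝ) * h)..(((i : ℝ) + 1) * h), u x) ^ 2
            - (∫ x in (0:ℝ)..1, u x) ^ 2)
          + cp ^ 2 * h ^ 2 * ∫ x in (0:ℝ)..1, (u' x) ^ 2 := by
  have hn' : (0:ℝ) < n := by exact_mod_cast hn
  have hh0 : 0 < h := by rw [hh]; positivity
  have hnh : (n:ℝ) * h = 1 := by rw [hh]; field_simp
  -- cells are inside [0,1]
  have hsub : ∀ i : ℕ, i < n →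
      Set.Icc ((i:ℝ) * h) (((i:ℝ) + 1) * h) ⊆ Set.Icc 0 1 := by
    intro i hi
    apply Set.Icc_subset_Icc
    · positivity
    · rw [← hnh]
      have : (i:ℝ) + 1 ≤ (n:ℝ) := by exact_mod_cast hi
      nlinarith
  have hle : ∀ i : ℕ, (i:ℝ) * h ≤ ((i:ℝ) + 1) * h := by
    intro i; nlinarith
  have hucont : ContinuousOn u (Set.Icc 0 1) := fun x hx =>
    (hu x hx).continuousWithinAt
  -- integrability on each cell
  have hint : ∀ (f : ℝ → ℝ), ContinuousOn f (Set.Icc 0 1) → ∀ i : ℕ, i < n →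
      IntervalIntegrable f volume ((i:ℝ) * h) (((i:ℝ) + 1) * h) := by
    intro f hf i hi
    apply ContinuousOn.intervalIntegrable
    rw [Set.uIcc_of_le (hle i)]
    exact hf.mono (hsub i hi)
  have hu2cont : ContinuousOn (fun x => (u x)^2) (Set.Icc 0 1) := hucont.pow 2
  have hu'2cont : ContinuousOn (fun x => (u' x)^2) (Set.Icc 0 1) := hu'c.pow 2
  -- per-cell key estimate
  set I : ℕ → ℝ := fun i => ∫ x in ((i:ℝ) * h)..(((i:ℝ) + 1) * h), u x with hI
  have key : ∀ i : ℕ, i < n →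
      (1 / h) * (I i)^2 ≤ (∫ x in ((i:ℝ) * h)..(((i:ℝ) + 1) * h), (u x)^2) ∧
      (∫ x in ((i:ℝ) * h)..(((i:ℝ) + 1) * h), (u x)^2)
        ≤ (1 / h) * (I i)^2
          + cp^2 * h^2 * ∫ x in ((i:ℝ) * h)..(((i:ℝ) + 1) * h), (u' x)^2 := by
    intro i hi
    set a := (i:ℝ) * h
    set b := ((i:ℝ) + 1) * h
    have hba : b - a = h := by simp only [a, b]; ring
    set c : ℝ := I i / h with hc
    -- w = u - c
    have hw : ∀ x ∈ Set.Icc a b, HasDerivWithinAt (fun x => u x - c) (u' x) (Set.Icc a b) x := by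
      intro x hx
      exact ((hu x (hsub i hi hx)).mono (hsub i hi)).sub_const c
    have hwc : ContinuousOn u' (Set.Icc a b) := hu'c.mono (hsub i hi)
    have hiu : IntervalIntegrable u volume a b := hint u hucont i hi
    have hiu2 : IntervalIntegrable (fun x => (u x)^2) volume a b := hint _ hu2cont i hi
    have hmean : (∫ x in a..b, (u x - c)) = 0 := by
      rw [intervalIntegral.integral_sub hiu (intervalIntegrable_const)]
      rw [intervalIntegral.integral_const]
      rw [hba]
      simp only [smul_eq_mul, hc]
      field_simp
      exact sub_self _
    have hpo := hpoin (fun x => u x - c) u' i hi hw hwc hmean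
    have hexp : (∫ x in a..b, (u x - c)^2)
        = (∫ x in a..b, (u x)^2) - (1 / h) * (I i)^2 := by
      have e1 : ∀ x, (u x - c)^2 = (u x)^2 - (2 * c * u x - c^2) := by intro x; ring
      rw [intervalIntegral.integral_congr (g := fun x => (u x)^2 - (2 * c * u x - c^2))
        (fun x _ => e1 x)]
      rw [intervalIntegral.integral_sub hiu2 ((hiu.const_mul (2*c)).sub intervalIntegrable_const)]
      rw [intervalIntegral.integral_sub (hiu.const_mul (2*c)) intervalIntegrable_const]
      rw [intervalIntegral.integral_const, hba]
      have : (∫ x in a..b, 2 * c * u x) = 2 * c * I i := by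
        rw [← intervalIntegral.integral_const_mul]
      rw [this]
      simp only [smul_eq_mul, hc]
      field_simp
      ring
    constructor
    · have hnn : 0 ≤ ∫ x in a..b, (u x - c)^2 := by
        apply intervalIntegral.integral_nonneg (hle i)
        intro x _; positivity
      linarith [hexp ▸ hnn]
    · have := hexp ▸ hpo
      linarith
  -- sum over cells
  have hcast : ∀ k : ℕ, ((k:ℝ) + 1) * h = ((k + 1 : ℕ) : ℝ) * h := by
    intro k; push_cast; ring
  have hsum2 : ∑ i ∈ Finset.range n, (∫ x in ((i:ℝ) * h)..(((i:ℝ) + 1) * h), (u x)^2)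
      = ∫ x in (0:ℝ)..1, (u x)^2 := by
    have := intervalIntegral.sum_integral_adjacent_intervals
      (a := fun k : ℕ => (k:ℝ) * h) (n := n) (f := fun x => (u x)^2) (μ := volume)
      (fun k hk => by simpa [← hcast k] using hint _ hu2cont k hk)
    simp only [Nat.cast_zero, zero_mul, hnh] at this
    rw [← this]
    exact Finset.sum_congr rfl fun k _ => by rw [hcast k]
  have hsum2' : ∑ i ∈ Finset.range n, (∫ x in ((i:ℝ) * h)..(((i:ℝ) + 1) * h), (u' x)^2)
      = ∫ x in (0:ℝ)..1, (u' x)^2 := by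
    have := intervalIntegral.sum_integral_adjacent_intervals
      (a := fun k : ℕ => (k:ℝ) * h) (n := n) (f := fun x => (u' x)^2) (μ := volume)
      (fun k hk => by simpa [← hcast k] using hint _ hu'2cont k hk)
    simp only [Nat.cast_zero, zero_mul, hnh] at this
    rw [← this]
    exact Finset.sum_congr rfl fun k _ => by rw [hcast k]
  have hS1 : (1 / h) * ∑ i ∈ Finset.range n, (I i)^2 ≤ ∫ x in (0:ℝ)..1, (u x)^2 := by
    rw [← hsum2, Finset.mul_sum]
    exact Finset.sum_le_sum fun i hi => (key i (Finset.mem_range.mp hi)).1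
  have hS2 : (∫ x in (0:ℝ)..1, (u x)^2)
      ≤ (1 / h) * ∑ i ∈ Finset.range n, (I i)^2
        + cp^2 * h^2 * ∫ x in (0:ℝ)..1, (u' x)^2 := by
    rw [← hsum2, ← hsum2', Finset.mul_sum, Finset.mul_sum, ← Finset.sum_add_distrib]
    exact Finset.sum_le_sum fun i hi => (key i (Finset.mem_range.mp hi)).2
  constructor
  · linarith
  · linarith
end

section
/- Let v_h = w_h + B_h where w_h is continuous piecewise linear on the uniform mesh with w_h(0) = w_h(1) = 0 and B_h = Σ_{i=1}^n (β_i − β_{i−1}) B_i with β_i = w_h(x_i) and B_i the quadratic bubble on [x_{i−1}, x_i]. Then ∫_0^1 (v_h')^2 = (19/3) ∫_0^1 (w_h')^2. -/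
open intervalIntegral MeasureTheory

lemma cellv_hasDeriv (c s a b h x : ℝ) (hne : h ≠ 0) :
    HasDerivAt (fun y => c + s * (y - a) + (s * h) * (4 * (y - a) * (b - y) / h ^ 2))
      (s * (1 + 4 * (a + b - 2 * x) / h)) x := by
  have h1 : HasDerivAt (fun y : ℝ => c + s * (y - a)) s x := by
    have := (((hasDerivAt_id x).sub_const a).const_mul s).const_add c
    simpa using this
  have h2 : HasDerivAt (fun y : ℝ => (s * h) * (4 * (y - a) * (b - y) / h ^ 2))
      ((s * h) * ((4 * 1 * (b - x) + 4 * (x - a) * (0 - 1)) / h ^ 2)) x := by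
    have hy : HasDerivAt (fun y : ℝ => 4 * (y - a)) (4 * 1) x :=
      ((hasDerivAt_id x).sub_const a).const_mul 4
    have hz : HasDerivAt (fun y : ℝ => b - y) (0 - 1) x :=
      (hasDerivAt_const x b).sub (hasDerivAt_id x)
    exact (((hy.mul hz).div_const (h ^ 2)).const_mul (s * h))
  have := h1.add h2
  refine this.congr_deriv ?_
  field_simp
  ring

lemma cellv_anti (s a b h x : ℝ) (hne : h ≠ 0) :
    HasDerivAt (fun x => -s ^ 2 * h * (1 + 4 * (a + b - 2 * x) / h) ^ 3 / 24)
      ((s * (1 + 4 * (a + b - 2 * x) / h)) ^ 2) x := by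
  have ht : HasDerivAt (fun x : ℝ => 1 + 4 * (a + b - 2 * x) / h)
      ((4 * (0 - 2 * 1)) / h) x := by
    have : HasDerivAt (fun x : ℝ => a + b - 2 * x) (0 - 2 * 1) x :=
      (hasDerivAt_const x (a + b)).sub ((hasDerivAt_id x).const_mul 2)
    exact (((this.const_mul 4).div_const h)).const_add 1
  have := ((ht.pow 3).const_mul (-s ^ 2 * h)).div_const 24
  refine this.congr_deriv ?_
  push_cast
  field_simp
  ring

lemma cell_integral (s a b h : ℝ) (hne : h ≠ 0) (hb : b = a + h) :
    (∫ x in a..b, (s * (1 + 4 * (a + b - 2 * x) / h)) ^ 2) = 19 / 3 * (s ^ 2 * h) := by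
  have hcont : Continuous fun x : ℝ => (s * (1 + 4 * (a + b - 2 * x) / h)) ^ 2 := by
    fun_prop
  rw [intervalIntegral.integral_eq_sub_of_hasDerivAt
      (fun x _ => cellv_anti s a b h x hne) (hcont.intervalIntegrable a b)]
  subst hb
  field_simp
  ring

lemma ae_ne_real (c : ℝ) : ∀ᵐ x : ℝ, x ≠ c := by
  rw [ae_iff]
  convert Real.volume_singleton (a := c) using 2
  ext x; simp

theorem bubble_enriched_test_norm (n : ℕ) (hn : 0 < n) (h : ℝ) (hh : h = 1 / n)
    (β : ℕ → ℝ) (hβ0 : β 0 = 0) (hβn : β n = 0)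
    (w : ℝ → ℝ)
    (hw : ∀ i < n, ∀ x ∈ Set.Icc ((i : ℝ) * h) (((i : ℝ) + 1) * h),
      w x = β i + (β (i + 1) - β i) / h * (x - (i : ℝ) * h))
    (hwval : ∀ i ≤ n, w ((i : ℝ) * h) = β i)
    (B : ℕ → ℝ → ℝ)
    (hB : ∀ i x, B i x = if x ∈ Set.Icc ((i : ℝ) * h) (((i : ℝ) + 1) * h)
        then 4 * (x - (i : ℝ) * h) * ((((i : ℝ) + 1) * h) - x) / h ^ 2 else 0)
    (v : ℝ → ℝ)
    (hv : ∀ x, v x = w x + ∑ i ∈ Finset.range n, (β (i + 1) - β i) * B i x) :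
    (∫ x in (0:ℝ)..1, (deriv v x) ^ 2) = (19 / 3) * ∫ x in (0:ℝ)..1, (deriv w x) ^ 2 := by
  have hn' : (0:ℝ) < n := by exact_mod_cast hn
  have hhpos : 0 < h := by rw [hh]; positivity
  have hne : h ≠ 0 := ne_of_gt hhpos
  set s : ℕ → ℝ := fun i => (β (i+1) - β i) / h with hsdef
  have hsh : ∀ i, s i * h = β (i+1) - β i := by
    intro i; simp only [hsdef]; field_simp
  -- derivative of w on open cells
  have hdw : ∀ i < n, ∀ x ∈ Set.Ioo ((i:ℝ)*h) (((i:ℝ)+1)*h), deriv w x = s i := by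
    intro i hi x hx
    have hopen : Set.Ioo ((i:ℝ)*h) (((i:ℝ)+1)*h) ∈ nhds x := isOpen_Ioo.mem_nhds hx
    have heq : w =ᶠ[nhds x] fun y => β i + s i * (y - (i:ℝ)*h) := by
      filter_upwards [hopen] with y hy
      exact hw i hi y (Set.Ioo_subset_Icc_self hy)
    rw [heq.deriv_eq]
    have hd : HasDerivAt (fun y => β i + s i * (y - (i:ℝ)*h)) (s i) x := by
      have := (((hasDerivAt_id x).sub_const ((i:ℝ)*h)).const_mul (s i)).const_add (β i)
      simpa using this
    exact hd.deriv
  -- derivative of v on open cells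
  have hdv : ∀ i < n, ∀ x ∈ Set.Ioo ((i:ℝ)*h) (((i:ℝ)+1)*h),
      deriv v x = s i * (1 + 4 * ((i:ℝ)*h + ((i:ℝ)+1)*h - 2*x) / h) := by
    intro i hi x hx
    have hopen : Set.Ioo ((i:ℝ)*h) (((i:ℝ)+1)*h) ∈ nhds x := isOpen_Ioo.mem_nhds hx
    have heq : v =ᶠ[nhds x] fun y => β i + s i * (y - (i:ℝ)*h)
        + (s i * h) * (4 * (y - (i:ℝ)*h) * ((((i:ℝ)+1)*h) - y) / h ^ 2) := by
      filter_upwards [hopen] with y hy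
      rw [hv y, hw i hi y (Set.Ioo_subset_Icc_self hy)]
      have hsum : ∑ j ∈ Finset.range n, (β (j+1) - β j) * B j y
          = (β (i+1) - β i) * (4 * (y - (i:ℝ)*h) * ((((i:ℝ)+1)*h) - y) / h ^ 2) := by
        rw [Finset.sum_eq_single i]
        · rw [hB i y, if_pos (Set.Ioo_subset_Icc_self hy)]
        · intro j _ hji
          rw [hB j y, if_neg, mul_zero]
          intro hyj
          rcases lt_or_gt_of_ne hji with hlt | hgt
          · have hle : ((j:ℝ)+1) * h ≤ (i:ℝ) * h := by
              apply mul_le_mul_of_nonneg_right _ hhpos.le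
              exact_mod_cast Nat.succ_le_of_lt hlt
            exact absurd hyj.2 (not_le.mpr (lt_of_le_of_lt hle hy.1))
          · have hle : ((i:ℝ)+1) * h ≤ (j:ℝ) * h := by
              apply mul_le_mul_of_nonneg_right _ hhpos.le
              exact_mod_cast Nat.succ_le_of_lt hgt
            exact absurd hyj.1 (not_le.mpr (lt_of_lt_of_le hy.2 hle))
        · intro hni
          exact absurd (Finset.mem_range.mpr hi) hni
      rw [hsum, ← hsh i, mul_div_cancel_right₀ (s i) hne]
    rw [heq.deriv_eq]
    exact (cellv_hasDeriv (β i) (s i) ((i:ℝ)*h) (((i:ℝ)+1)*h) h x hne).deriv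
  have hab : ∀ i : ℕ, (i:ℝ)*h ≤ ((i:ℝ)+1)*h := by
    intro i; nlinarith [hhpos]
  -- a.e. equalities on cells
  have haew : ∀ i < n, ∀ᵐ x : ℝ, x ∈ Set.uIoc ((i:ℝ)*h) (((i:ℝ)+1)*h) →
      (deriv w x) ^ 2 = (s i) ^ 2 := by
    intro i hi
    filter_upwards [ae_ne_real (((i:ℝ)+1)*h)] with x hx hxI
    rw [Set.uIoc_of_le (hab i)] at hxI
    rw [hdw i hi x ⟨hxI.1, lt_of_le_of_ne hxI.2 hx⟩]
  have haev : ∀ i < n, ∀ᵐ x : ℝ, x ∈ Set.uIoc ((i:ℝ)*h) (((i:ℝ)+1)*h) →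
      (deriv v x) ^ 2 = (s i * (1 + 4 * ((i:ℝ)*h + ((i:ℝ)+1)*h - 2*x) / h)) ^ 2 := by
    intro i hi
    filter_upwards [ae_ne_real (((i:ℝ)+1)*h)] with x hx hxI
    rw [Set.uIoc_of_le (hab i)] at hxI
    rw [hdv i hi x ⟨hxI.1, lt_of_le_of_ne hxI.2 hx⟩]
  -- per-cell integrals
  have hIw : ∀ i < n, (∫ x in (i:ℝ)*h..((i:ℝ)+1)*h, (deriv w x) ^ 2) = (s i) ^ 2 * h := by
    intro i hi
    rw [intervalIntegral.integral_congr_ae (haew i hi)]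
    rw [intervalIntegral.integral_const, smul_eq_mul]
    ring
  have hIv : ∀ i < n, (∫ x in (i:ℝ)*h..((i:ℝ)+1)*h, (deriv v x) ^ 2)
      = 19 / 3 * ((s i) ^ 2 * h) := by
    intro i hi
    rw [intervalIntegral.integral_congr_ae (haev i hi)]
    exact cell_integral (s i) ((i:ℝ)*h) (((i:ℝ)+1)*h) h hne (by ring)
  -- integrability
  have hintw : ∀ k < n, IntervalIntegrable (fun x => (deriv w x) ^ 2) volume
      ((k:ℝ)*h) (((k:ℝ)+1)*h) := by
    intro k hk
    exact ((continuous_const (y := (s k)^2)).intervalIntegrable _ _).congr_ae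
      (Filter.EventuallyEq.symm ((MeasureTheory.ae_restrict_iff' measurableSet_uIoc).mpr (haew k hk)))
  have hintv : ∀ k < n, IntervalIntegrable (fun x => (deriv v x) ^ 2) volume
      ((k:ℝ)*h) (((k:ℝ)+1)*h) := by
    intro k hk
    have hcont : Continuous fun x : ℝ =>
        (s k * (1 + 4 * ((k:ℝ)*h + ((k:ℝ)+1)*h - 2*x) / h)) ^ 2 := by fun_prop
    exact (hcont.intervalIntegrable _ _).congr_ae
      (Filter.EventuallyEq.symm ((MeasureTheory.ae_restrict_iff' measurableSet_uIoc).mpr (haev k hk)))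
  -- decompose
  set a : ℕ → ℝ := fun k => (k:ℝ) * h with hadef
  have hcast : ∀ k : ℕ, a (k+1) = ((k:ℝ)+1)*h := by
    intro k; simp only [hadef]; push_cast; ring
  have ha0 : a 0 = 0 := by simp [hadef]
  have han : a n = 1 := by
    simp only [hadef, hh]; field_simp
  have hsplitv : (∫ x in (0:ℝ)..1, (deriv v x) ^ 2)
      = ∑ k ∈ Finset.range n, ∫ x in a k..a (k+1), (deriv v x) ^ 2 := by
    rw [intervalIntegral.sum_integral_adjacent_intervals
      (fun k hk => by rw [hcast k]; exact hintv k hk), ha0, han]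
  have hsplitw : (∫ x in (0:ℝ)..1, (deriv w x) ^ 2)
      = ∑ k ∈ Finset.range n, ∫ x in a k..a (k+1), (deriv w x) ^ 2 := by
    rw [intervalIntegral.sum_integral_adjacent_intervals
      (fun k hk => by rw [hcast k]; exact hintw k hk), ha0, han]
  rw [hsplitv, hsplitw, Finset.mul_sum]
  apply Finset.sum_congr rfl
  intro k hk
  have hk' := Finset.mem_range.mp hk
  rw [hcast k, hIv k hk', hIw k hk']
end

section
/- For u_h continuous piecewise linear and v_h = w_h + B_h in the bubble-enriched test space (B_h = Σ (β_i − β_{i−1}) B_i, β_i = w_h(x_i)), the bilinear form b(v_h, u_h) = ε ∫ u_h' v_h' + ∫ u_h' v_h satisfies b(v_h, u_h) = (ε + 2h/3) ∫ u_h' w_h' + ∫ u_h' w_h. -/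
open intervalIntegral MeasureTheory Set

lemma poly_int (p q r A B : ℝ) :
    (∫ x in A..B, (p + q*x + r*x^2)) = p*(B-A) + q*(B^2-A^2)/2 + r*(B^3-A^3)/3 := by
  have hd : ∀ x ∈ Set.uIcc A B, HasDerivAt (fun y => p*y + q*y^2/2 + r*y^3/3)
      (p + q*x + r*x^2) x := by
    intro x _
    have h1 : HasDerivAt (fun y : ℝ => p*y) p x := by
      simpa using (hasDerivAt_id x).const_mul p
    have h2 : HasDerivAt (fun y : ℝ => q*y^2/2) (q*x) x := by
      have := ((hasDerivAt_pow 2 x).const_mul q).div_const 2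
      refine this.congr_deriv ?_; push_cast; ring
    have h3 : HasDerivAt (fun y : ℝ => r*y^3/3) (r*x^2) x := by
      have := ((hasDerivAt_pow 3 x).const_mul r).div_const 3
      refine this.congr_deriv ?_; push_cast; ring
    exact (h1.add h2).add h3
  have hc : IntervalIntegrable (fun x => p + q*x + r*x^2) volume A B :=
    Continuous.intervalIntegrable (by continuity) A B
  rw [intervalIntegral.integral_eq_sub_of_hasDerivAt hd hc]
  ring

lemma cell_int (A B : ℝ) (hAB : A ≤ B) (f : ℝ → ℝ) (p q r : ℝ)
    (hf : ∀ x ∈ Set.Ioo A B, f x = p + q*x + r*x^2) :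
    (∫ x in A..B, f x) = p*(B-A) + q*(B^2-A^2)/2 + r*(B^3-A^3)/3
      ∧ IntervalIntegrable f volume A B := by
  have hne : ∀ᵐ x : ℝ, x ≠ B := by
    have : (volume ({B} : Set ℝ)) = 0 := Real.volume_singleton
    simp [MeasureTheory.ae_iff]
  have hae : ∀ᵐ x ∂(volume.restrict (Set.Ioc A B)),
      (fun x => p + q*x + r*x^2) x = f x := by
    rw [MeasureTheory.ae_restrict_iff' measurableSet_Ioc]
    filter_upwards [hne] with x hxB hx
    exact (hf x ⟨hx.1, lt_of_le_of_ne hx.2 hxB⟩).symm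
  have hgi : IntegrableOn (fun x => p + q*x + r*x^2) (Set.Ioc A B) volume :=
    (Continuous.integrableOn_Ioc (by continuity))
  have hfi : IntegrableOn f (Set.Ioc A B) volume := hgi.congr hae
  have hint : IntervalIntegrable f volume A B := by
    rw [intervalIntegrable_iff_integrableOn_Ioc_of_le hAB]; exact hfi
  constructor
  · have : (∫ x in A..B, f x) = ∫ x in A..B, (p + q*x + r*x^2) := by
      apply intervalIntegral.integral_congr_ae
      rw [Set.uIoc_of_le hAB]
      filter_upwards [hne] with x hxB hx
      exact hf x ⟨hx.1, lt_of_le_of_ne hx.2 hxB⟩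
    rw [this, poly_int]
  · exact hint

theorem bubble_enriched_bilinear_form (n : ℕ) (hn : 0 < n) (h : ℝ) (hh : h = 1 / n)
    (ε : ℝ)
    (α : ℕ → ℝ) (hα0 : α 0 = 0) (hαn : α n = 0)
    (u : ℝ → ℝ)
    (hu : ∀ i < n, ∀ x ∈ Set.Icc ((i : ℝ) * h) (((i : ℝ) + 1) * h),
      u x = α i + (α (i + 1) - α i) / h * (x - (i : ℝ) * h))
    (β : ℕ → ℝ) (hβ0 : β 0 = 0) (hβn : β n = 0)
    (w : ℝ → ℝ)
    (hw : ∀ i < n, ∀ x ∈ Set.Icc ((i : ℝ) * h) (((i : ℝ) + 1) * h),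
      w x = β i + (β (i + 1) - β i) / h * (x - (i : ℝ) * h))
    (B : ℕ → ℝ → ℝ)
    (hB : ∀ i x, B i x = if x ∈ Set.Icc ((i : ℝ) * h) (((i : ℝ) + 1) * h)
        then 4 * (x - (i : ℝ) * h) * ((((i : ℝ) + 1) * h) - x) / h ^ 2 else 0)
    (v : ℝ → ℝ)
    (hv : ∀ x, v x = w x + ∑ i ∈ Finset.range n, (β (i + 1) - β i) * B i x) :
    ε * (∫ x in (0:ℝ)..1, deriv u x * deriv v x)
        + (∫ x in (0:ℝ)..1, deriv u x * v x)
      = (ε + 2 * h / 3) * (∫ x in (0:ℝ)..1, deriv u x * deriv w x)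
        + (∫ x in (0:ℝ)..1, deriv u x * w x) := by
  have hn' : (n:ℝ) ≠ 0 := Nat.cast_ne_zero.2 hn.ne'
  have hh0 : 0 < h := by rw [hh]; positivity
  have hhne : h ≠ 0 := hh0.ne'
  -- cell endpoints
  have hlt : ∀ i : ℕ, (i:ℝ)*h < ((i:ℝ)+1)*h := by
    intro i
    have : (i:ℝ) < (i:ℝ)+1 := by linarith
    exact mul_lt_mul_of_pos_right this hh0
  -- derivative of u on open cells
  have hdu : ∀ i < n, ∀ x ∈ Set.Ioo ((i:ℝ)*h) (((i:ℝ)+1)*h),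
      deriv u x = (α (i+1) - α i)/h := by
    intro i hi x hx
    have hev : u =ᶠ[nhds x]
        (fun y => α i + (α (i+1) - α i)/h * (y - (i:ℝ)*h)) := by
      filter_upwards [Ioo_mem_nhds hx.1 hx.2] with y hy
      exact hu i hi y (Set.Ioo_subset_Icc_self hy)
    rw [hev.deriv_eq]
    have hD : HasDerivAt (fun y => α i + (α (i+1) - α i)/h * (y - (i:ℝ)*h))
        ((α (i+1) - α i)/h) x := by
      have := (((hasDerivAt_id x).sub_const ((i:ℝ)*h)).const_mul
        ((α (i+1) - α i)/h)).const_add (α i)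
      simpa using this
    exact hD.deriv
  -- derivative of w on open cells
  have hdw : ∀ i < n, ∀ x ∈ Set.Ioo ((i:ℝ)*h) (((i:ℝ)+1)*h),
      deriv w x = (β (i+1) - β i)/h := by
    intro i hi x hx
    have hev : w =ᶠ[nhds x]
        (fun y => β i + (β (i+1) - β i)/h * (y - (i:ℝ)*h)) := by
      filter_upwards [Ioo_mem_nhds hx.1 hx.2] with y hy
      exact hw i hi y (Set.Ioo_subset_Icc_self hy)
    rw [hev.deriv_eq]
    have hD : HasDerivAt (fun y => β i + (β (i+1) - β i)/h * (y - (i:ℝ)*h))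
        ((β (i+1) - β i)/h) x := by
      have := (((hasDerivAt_id x).sub_const ((i:ℝ)*h)).const_mul
        ((β (i+1) - β i)/h)).const_add (β i)
      simpa using this
    exact hD.deriv
  -- local form of v on open cells
  have hvloc : ∀ i < n, ∀ x ∈ Set.Ioo ((i:ℝ)*h) (((i:ℝ)+1)*h),
      v x = β i + (β (i+1) - β i)/h * (x - (i:ℝ)*h)
        + (β (i+1) - β i) * (4 * (x - (i:ℝ)*h) * ((((i:ℝ)+1)*h) - x) / h^2) := by
    intro i hi x hx
    rw [hv, hw i hi x (Set.Ioo_subset_Icc_self hx)]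
    congr 1
    rw [Finset.sum_eq_single i]
    · rw [hB i x, if_pos (Set.Ioo_subset_Icc_self hx)]
    · intro j hj hji
      rw [hB j x, if_neg, mul_zero]
      intro hmem
      rcases lt_or_gt_of_ne hji with hlt' | hgt
      · -- j < i : (j+1)*h ≤ i*h < x
        have h1 : ((j:ℝ)+1) ≤ (i:ℝ) := by exact_mod_cast hlt'
        have : ((j:ℝ)+1)*h ≤ (i:ℝ)*h := mul_le_mul_of_nonneg_right h1 hh0.le
        linarith [hmem.2, hx.1]
      · -- i < j : x < (i+1)*h ≤ j*h
        have h1 : ((i:ℝ)+1) ≤ (j:ℝ) := by exact_mod_cast hgt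
        have : ((i:ℝ)+1)*h ≤ (j:ℝ)*h := mul_le_mul_of_nonneg_right h1 hh0.le
        linarith [hmem.1, hx.2]
    · intro hni
      exact absurd (Finset.mem_range.2 hi) hni
  -- derivative of v on open cells
  have hdv : ∀ i < n, ∀ x ∈ Set.Ioo ((i:ℝ)*h) (((i:ℝ)+1)*h),
      deriv v x = (β (i+1) - β i)/h
        + (β (i+1) - β i) * (4 * ((i:ℝ)*h + ((i:ℝ)+1)*h - 2*x) / h^2) := by
    intro i hi x hx
    have hev : v =ᶠ[nhds x]
        (fun y => β i + (β (i+1) - β i)/h * (y - (i:ℝ)*h)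
          + (β (i+1) - β i) * (4 * (y - (i:ℝ)*h) * ((((i:ℝ)+1)*h) - y) / h^2)) := by
      filter_upwards [Ioo_mem_nhds hx.1 hx.2] with y hy
      exact hvloc i hi y hy
    rw [hev.deriv_eq]
    have hfe : (fun y => β i + (β (i+1) - β i)/h * (y - (i:ℝ)*h)
          + (β (i+1) - β i) * (4 * (y - (i:ℝ)*h) * ((((i:ℝ)+1)*h) - y) / h^2))
        = (fun y => (β i + (β (i+1) - β i)/h * (y - (i:ℝ)*h))
          + ((β (i+1) - β i) * 4 / h^2) * ((y - (i:ℝ)*h) * ((((i:ℝ)+1)*h) - y))) := by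
      funext y; ring
    rw [hfe]
    have hD1 : HasDerivAt (fun y => β i + (β (i+1) - β i)/h * (y - (i:ℝ)*h))
        ((β (i+1) - β i)/h) x := by
      have := (((hasDerivAt_id x).sub_const ((i:ℝ)*h)).const_mul
        ((β (i+1) - β i)/h)).const_add (β i)
      simpa using this
    have hD2 : HasDerivAt (fun y : ℝ => (y - (i:ℝ)*h) * ((((i:ℝ)+1)*h) - y))
        ((((i:ℝ)+1)*h) - x + ((i:ℝ)*h - x)) x := by
      have := ((hasDerivAt_id x).sub_const ((i:ℝ)*h)).mul
        ((hasDerivAt_const x ((((i:ℝ)+1))*h)).sub (hasDerivAt_id x))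
      exact this.congr_deriv (by simp)
    have hD := hD1.add (hD2.const_mul ((β (i+1) - β i) * 4 / h^2))
    refine hD.deriv.trans ?_
    ring
  -- per-cell integral computations
  have cell1 : ∀ i < n,
      (∫ x in ((i:ℝ)*h)..(((i:ℝ)+1)*h), deriv u x * deriv v x)
        = (∫ x in ((i:ℝ)*h)..(((i:ℝ)+1)*h), deriv u x * deriv w x)
      ∧ IntervalIntegrable (fun x => deriv u x * deriv v x) volume ((i:ℝ)*h) (((i:ℝ)+1)*h)
      ∧ IntervalIntegrable (fun x => deriv u x * deriv w x) volume ((i:ℝ)*h) (((i:ℝ)+1)*h) := by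
    intro i hi
    have hfv : ∀ x ∈ Set.Ioo ((i:ℝ)*h) (((i:ℝ)+1)*h),
        deriv u x * deriv v x
          = ((α (i+1) - α i)/h*((β (i+1) - β i)/h)
              + 4*((α (i+1) - α i)/h)*(β (i+1) - β i)*((i:ℝ)*h+((i:ℝ)+1)*h)/h^2)
            + (-(8*((α (i+1) - α i)/h)*(β (i+1) - β i)/h^2))*x + 0*x^2 := by
      intro x hx
      rw [hdu i hi x hx, hdv i hi x hx]
      ring
    have hfw : ∀ x ∈ Set.Ioo ((i:ℝ)*h) (((i:ℝ)+1)*h),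
        deriv u x * deriv w x
          = ((α (i+1) - α i)/h*((β (i+1) - β i)/h)) + 0*x + 0*x^2 := by
      intro x hx
      rw [hdu i hi x hx, hdw i hi x hx]
      ring
    have hv' := cell_int _ _ (hlt i).le (fun x => deriv u x * deriv v x) _ _ _ hfv
    have hw' := cell_int _ _ (hlt i).le (fun x => deriv u x * deriv w x) _ _ _ hfw
    refine ⟨?_, hv'.2, hw'.2⟩
    rw [hv'.1, hw'.1]
    field_simp
    ring
  have cell2 : ∀ i < n,
      (∫ x in ((i:ℝ)*h)..(((i:ℝ)+1)*h), deriv u x * v x)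
        = (∫ x in ((i:ℝ)*h)..(((i:ℝ)+1)*h), deriv u x * w x)
          + (2*h/3) * (∫ x in ((i:ℝ)*h)..(((i:ℝ)+1)*h), deriv u x * deriv w x)
      ∧ IntervalIntegrable (fun x => deriv u x * v x) volume ((i:ℝ)*h) (((i:ℝ)+1)*h)
      ∧ IntervalIntegrable (fun x => deriv u x * w x) volume ((i:ℝ)*h) (((i:ℝ)+1)*h) := by
    intro i hi
    have hfv : ∀ x ∈ Set.Ioo ((i:ℝ)*h) (((i:ℝ)+1)*h),
        deriv u x * v x
          = (((α (i+1) - α i)/h)*(β i) - ((α (i+1) - α i)/h)*((β (i+1) - β i)/h)*((i:ℝ)*h)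
              - 4*((α (i+1) - α i)/h)*(β (i+1) - β i)*((i:ℝ)*h)*(((i:ℝ)+1)*h)/h^2)
            + (((α (i+1) - α i)/h)*((β (i+1) - β i)/h)
              + 4*((α (i+1) - α i)/h)*(β (i+1) - β i)*((i:ℝ)*h+((i:ℝ)+1)*h)/h^2)*x
            + (-(4*((α (i+1) - α i)/h)*(β (i+1) - β i)/h^2))*x^2 := by
      intro x hx
      rw [hdu i hi x hx, hvloc i hi x hx]
      ring
    have hfw : ∀ x ∈ Set.Ioo ((i:ℝ)*h) (((i:ℝ)+1)*h),
        deriv u x * w x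
          = (((α (i+1) - α i)/h)*(β i) - ((α (i+1) - α i)/h)*((β (i+1) - β i)/h)*((i:ℝ)*h))
            + (((α (i+1) - α i)/h)*((β (i+1) - β i)/h))*x + 0*x^2 := by
      intro x hx
      rw [hdu i hi x hx, hw i hi x (Set.Ioo_subset_Icc_self hx)]
      ring
    have hfw3 : ∀ x ∈ Set.Ioo ((i:ℝ)*h) (((i:ℝ)+1)*h),
        deriv u x * deriv w x
          = ((α (i+1) - α i)/h*((β (i+1) - β i)/h)) + 0*x + 0*x^2 := by
      intro x hx
      rw [hdu i hi x hx, hdw i hi x hx]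
      ring
    have hv' := cell_int _ _ (hlt i).le (fun x => deriv u x * v x) _ _ _ hfv
    have hw' := cell_int _ _ (hlt i).le (fun x => deriv u x * w x) _ _ _ hfw
    have hw3 := cell_int _ _ (hlt i).le (fun x => deriv u x * deriv w x) _ _ _ hfw3
    refine ⟨?_, hv'.2, hw'.2⟩
    rw [hv'.1, hw'.1, hw3.1]
    field_simp
    ring
  -- summing over cells
  have hsum : ∀ (f : ℝ → ℝ),
      (∀ i < n, IntervalIntegrable f volume ((i:ℝ)*h) (((i:ℝ)+1)*h)) →
      (∫ x in (0:ℝ)..1, f x)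
        = ∑ i ∈ Finset.range n, ∫ x in ((i:ℝ)*h)..(((i:ℝ)+1)*h), f x := by
    intro f hf
    have key := intervalIntegral.sum_integral_adjacent_intervals
      (μ := volume) (a := fun i : ℕ => (i:ℝ)*h) (n := n) (f := f) ?hint
    case hint =>
      intro k hk
      have := hf k hk
      simpa [Nat.cast_add, Nat.cast_one] using this
    have h0 : ((0:ℕ):ℝ)*h = 0 := by simp
    have h1 : ((n:ℕ):ℝ)*h = 1 := by
      rw [hh]; field_simp
    simp only [h0, h1] at key
    rw [← key]
    apply Finset.sum_congr rfl
    intro i _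
    norm_num [Nat.cast_add, Nat.cast_one]
  have s1 := hsum (fun x => deriv u x * deriv v x) (fun i hi => (cell1 i hi).2.1)
  have s2 := hsum (fun x => deriv u x * v x) (fun i hi => (cell2 i hi).2.1)
  have s3 := hsum (fun x => deriv u x * deriv w x) (fun i hi => (cell1 i hi).2.2)
  have s4 := hsum (fun x => deriv u x * w x) (fun i hi => (cell2 i hi).2.2)
  rw [s1, s2, s3, s4]
  rw [Finset.sum_congr rfl (fun i hi => (cell1 i (Finset.mem_range.1 hi)).1),
      Finset.sum_congr rfl (fun i hi => (cell2 i (Finset.mem_range.1 hi)).1)]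
  rw [Finset.sum_add_distrib, ← Finset.mul_sum]
  ring
end

section
/- (Discrete optimal norm for upwind PG) For u_h in the piecewise linear trial space M_h and the bubble-enriched test space V_h = span{φ_j + B_j − B_{j+1}}, the quantity sup_{v_h ∈ V_h} b(v_h, u_h)/|v_h| equals sqrt(3/19) · ((ε + 2h/3)^2 |u_h|^2 + |P_h T u_h|^2)^{1/2}, where P_h is the a_0-orthogonal projection onto M_h and |·| = ‖(·)'‖_{L^2}. -/
set_option maxHeartbeats 2000000
open MeasureTheory Set Finset intervalIntegral


lemma integral_quad (p q r a L : ℝ) :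
    ∫ x in a..(a+L), (p + q*(x-a) + r*(x-a)^2) = p*L + q*L^2/2 + r*L^3/3 := by
  have H : ∀ x ∈ Set.uIcc a (a+L), HasDerivAt (fun y => p*(y-a) + q*(y-a)^2/2 + r*(y-a)^3/3)
      (p + q*(x-a) + r*(x-a)^2) x := by
    intro x _
    have h1 : HasDerivAt (fun y : ℝ => y - a) 1 x := (hasDerivAt_id x).sub_const a
    have H2 := ((h1.const_mul p).add (((h1.pow 2).const_mul q).div_const 2)).add
      (((h1.pow 3).const_mul r).div_const 3)
    refine H2.congr_deriv ?_
    norm_num; ring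
  have hc : IntervalIntegrable (fun x => p + q*(x-a) + r*(x-a)^2) volume a (a+L) := by
    apply Continuous.intervalIntegrable; continuity
  have := intervalIntegral.integral_eq_sub_of_hasDerivAt H hc
  rw [this]; ring

lemma interval_congr_Ioo {a b : ℝ} (hab : a ≤ b) {f g : ℝ → ℝ}
    (hfg : ∀ x ∈ Set.Ioo a b, f x = g x) :
    ∫ x in a..b, f x = ∫ x in a..b, g x := by
  rw [intervalIntegral.integral_of_le hab, intervalIntegral.integral_of_le hab,
    MeasureTheory.integral_Ioc_eq_integral_Ioo, MeasureTheory.integral_Ioc_eq_integral_Ioo]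
  exact MeasureTheory.setIntegral_congr_fun measurableSet_Ioo hfg

lemma intervalIntegrable_congr_Ioo {a b : ℝ} (hab : a ≤ b) {f g : ℝ → ℝ}
    (hfg : ∀ x ∈ Set.Ioo a b, f x = g x) (hg : IntervalIntegrable g volume a b) :
    IntervalIntegrable f volume a b := by
  rw [intervalIntegrable_iff_integrableOn_Ioc_of_le hab] at hg ⊢
  rw [integrableOn_Ioc_iff_integrableOn_Ioo] at hg ⊢
  exact hg.congr_fun (fun x hx => (hfg x hx).symm) measurableSet_Ioo

noncomputable def bpAux (n : ℕ) (β : ℕ → ℝ) (j : ℕ) : ℝ := if 1 ≤ j ∧ j ≤ n - 1 then β j else 0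

lemma phi_zero {h : ℝ} (hpos : 0 < h) {φ : ℕ → ℝ → ℝ}
    (hφ : ∀ (j : ℕ) (x : ℝ), φ j x = max 0 (1 - |x - (j : ℝ) * h| / h))
    {i j : ℕ} {x : ℝ} (hx : x ∈ Set.Ioo ((i : ℝ) * h) (((i : ℝ) + 1) * h))
    (hj : j ≠ i) (hj' : j ≠ i + 1) : φ j x = 0 := by
  obtain ⟨hx1, hx2⟩ := hx
  rw [hφ]
  apply max_eq_left
  have habs : h ≤ |x - (j : ℝ) * h| := by
    rcases (by omega : j + 1 ≤ i ∨ i + 2 ≤ j) with hc | hc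
    · have hc' : (j : ℝ) + 1 ≤ (i : ℝ) := by exact_mod_cast hc
      have h2 : h ≤ x - (j : ℝ) * h := by nlinarith
      exact le_trans h2 (le_abs_self _)
    · have hc' : (i : ℝ) + 2 ≤ (j : ℝ) := by exact_mod_cast hc
      have h2 : h ≤ (j : ℝ) * h - x := by nlinarith
      calc h ≤ (j : ℝ) * h - x := h2
        _ ≤ |x - (j : ℝ) * h| := by rw [abs_sub_comm]; exact le_abs_self _
  have h1 : 1 ≤ |x - (j : ℝ) * h| / h := (one_le_div hpos).2 habs
  linarith

lemma phi_self {h : ℝ} (hpos : 0 < h) {φ : ℕ → ℝ → ℝ}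
    (hφ : ∀ (j : ℕ) (x : ℝ), φ j x = max 0 (1 - |x - (j : ℝ) * h| / h))
    {i : ℕ} {x : ℝ} (hx : x ∈ Set.Ioo ((i : ℝ) * h) (((i : ℝ) + 1) * h)) :
    φ i x = 1 - (x - (i : ℝ) * h) / h := by
  obtain ⟨hx1, hx2⟩ := hx
  rw [hφ, abs_of_pos (by linarith)]
  apply max_eq_right
  have : (x - (i : ℝ) * h) / h ≤ 1 := by
    rw [div_le_one hpos]; nlinarith
  linarith

lemma phi_succ {h : ℝ} (hpos : 0 < h) {φ : ℕ → ℝ → ℝ}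
    (hφ : ∀ (j : ℕ) (x : ℝ), φ j x = max 0 (1 - |x - (j : ℝ) * h| / h))
    {i : ℕ} {x : ℝ} (hx : x ∈ Set.Ioo ((i : ℝ) * h) (((i : ℝ) + 1) * h)) :
    φ (i + 1) x = (x - (i : ℝ) * h) / h := by
  obtain ⟨hx1, hx2⟩ := hx
  rw [hφ]
  push_cast
  rw [abs_of_neg (by linarith)]
  have hval : 1 - -(x - ((i : ℝ) + 1) * h) / h = (x - (i : ℝ) * h) / h := by
    field_simp; ring
  rw [hval, max_eq_right (div_nonneg (by linarith) hpos.le)]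

lemma B_self {h : ℝ} {B : ℕ → ℝ → ℝ}
    (hB : ∀ i x, B i x = if x ∈ Set.Icc ((i : ℝ) * h) (((i : ℝ) + 1) * h)
        then 4 * (x - (i : ℝ) * h) * ((((i : ℝ) + 1) * h) - x) / h ^ 2 else 0)
    {i : ℕ} {x : ℝ} (hx : x ∈ Set.Ioo ((i : ℝ) * h) (((i : ℝ) + 1) * h)) :
    B i x = 4 * (x - (i : ℝ) * h) * ((((i : ℝ) + 1) * h) - x) / h ^ 2 := by
  rw [hB, if_pos ⟨hx.1.le, hx.2.le⟩]

lemma B_zero {h : ℝ} (hpos : 0 < h) {B : ℕ → ℝ → ℝ}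
    (hB : ∀ i x, B i x = if x ∈ Set.Icc ((i : ℝ) * h) (((i : ℝ) + 1) * h)
        then 4 * (x - (i : ℝ) * h) * ((((i : ℝ) + 1) * h) - x) / h ^ 2 else 0)
    {i k : ℕ} {x : ℝ} (hx : x ∈ Set.Ioo ((i : ℝ) * h) (((i : ℝ) + 1) * h))
    (hk : k ≠ i) : B k x = 0 := by
  obtain ⟨hx1, hx2⟩ := hx
  rw [hB, if_neg]
  rintro ⟨hm1, hm2⟩
  rcases (by omega : k + 1 ≤ i ∨ i + 1 ≤ k) with hc | hc
  · have hc' : (k : ℝ) + 1 ≤ (i : ℝ) := by exact_mod_cast hc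
    nlinarith
  · have hc' : (i : ℝ) + 1 ≤ (k : ℝ) := by exact_mod_cast hc
    nlinarith

lemma v_cell {n : ℕ} {h : ℝ} (hpos : 0 < h) {φ : ℕ → ℝ → ℝ}
    (hφ : ∀ (j : ℕ) (x : ℝ), φ j x = max 0 (1 - |x - (j : ℝ) * h| / h))
    {B : ℕ → ℝ → ℝ}
    (hB : ∀ i x, B i x = if x ∈ Set.Icc ((i : ℝ) * h) (((i : ℝ) + 1) * h)
        then 4 * (x - (i : ℝ) * h) * ((((i : ℝ) + 1) * h) - x) / h ^ 2 else 0)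
    {β : ℕ → ℝ} {v : ℝ → ℝ}
    (hv : ∀ x, v x = ∑ j ∈ Finset.Icc 1 (n - 1),
        β j * (φ j x + B (j - 1) x - B j x))
    {i : ℕ} (hi : i < n) {x : ℝ} (hx : x ∈ Set.Ioo ((i : ℝ) * h) (((i : ℝ) + 1) * h)) :
    v x = bpAux n β i + (bpAux n β (i + 1) - bpAux n β i) *
      (5 / h * (x - (i : ℝ) * h) - 4 / h ^ 2 * (x - (i : ℝ) * h) ^ 2) := by
  have hne : h ≠ 0 := hpos.ne'
  rw [hv x]
  have hcongr : ∀ j ∈ Finset.Icc 1 (n - 1),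
      β j * (φ j x + B (j - 1) x - B j x)
      = bpAux n β j * (φ j x + B (j - 1) x - B j x) := by
    intro j hj
    rw [Finset.mem_Icc] at hj
    simp [bpAux, hj.1, hj.2]
  rw [Finset.sum_congr rfl hcongr]
  have hext : ∑ j ∈ Finset.Icc 1 (n - 1), bpAux n β j * (φ j x + B (j - 1) x - B j x)
      = ∑ j ∈ Finset.range (n + 1), bpAux n β j * (φ j x + B (j - 1) x - B j x) := by
    apply Finset.sum_subset
    · intro j hj
      rw [Finset.mem_Icc] at hj
      rw [Finset.mem_range]; omega
    · intro j _ hj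
      rw [Finset.mem_Icc] at hj
      simp only [bpAux]
      rw [if_neg hj, zero_mul]
  rw [hext]
  simp_rw [mul_sub, mul_add]
  rw [Finset.sum_sub_distrib, Finset.sum_add_distrib]
  have S1 : ∑ j ∈ Finset.range (n + 1), bpAux n β j * φ j x
      = bpAux n β i * φ i x + bpAux n β (i + 1) * φ (i + 1) x := by
    have hsub2 : ({i, i + 1} : Finset ℕ) ⊆ Finset.range (n + 1) := by
      intro j hj; simp at hj; rw [Finset.mem_range]; omega
    have hpair : ∑ j ∈ ({i, i + 1} : Finset ℕ), bpAux n β j * φ j x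
        = ∑ j ∈ Finset.range (n + 1), bpAux n β j * φ j x := by
      apply Finset.sum_subset hsub2
      intro j _ hj; simp at hj
      rw [phi_zero hpos hφ hx (by tauto) (by tauto), mul_zero]
    rw [← hpair, Finset.sum_pair (by omega : i ≠ i + 1)]
  have S2 : ∑ j ∈ Finset.range (n + 1), bpAux n β j * B (j - 1) x
      = bpAux n β (i + 1) * B i x := by
    rw [Finset.sum_eq_single_of_mem (i + 1) (by rw [Finset.mem_range]; omega)]
    · norm_num
    · intro j _ hj
      rcases Nat.eq_zero_or_pos j with rfl | hj1
      · simp [bpAux]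
      · obtain ⟨k, rfl⟩ : ∃ k, j = k + 1 := ⟨j - 1, by omega⟩
        rw [(by omega : k + 1 - 1 = k), B_zero hpos hB hx (by omega), mul_zero]
  have S3 : ∑ j ∈ Finset.range (n + 1), bpAux n β j * B j x
      = bpAux n β i * B i x := by
    rw [Finset.sum_eq_single_of_mem i (by rw [Finset.mem_range]; omega)]
    intro j _ hj
    rw [B_zero hpos hB hx hj, mul_zero]
  rw [S1, S2, S3, phi_self hpos hφ hx, phi_succ hpos hφ hx, B_self hB hx]
  field_simp
  ring

lemma deriv_u_cell {n : ℕ} {h : ℝ} {α : ℕ → ℝ} {u : ℝ → ℝ}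
    (hu : ∀ i < n, ∀ x ∈ Set.Icc ((i : ℝ) * h) (((i : ℝ) + 1) * h),
      u x = α i + (α (i + 1) - α i) / h * (x - (i : ℝ) * h))
    {i : ℕ} (hi : i < n) {x : ℝ} (hx : x ∈ Set.Ioo ((i : ℝ) * h) (((i : ℝ) + 1) * h)) :
    deriv u x = (α (i + 1) - α i) / h := by
  have hev : u =ᶠ[nhds x] fun y => α i + (α (i + 1) - α i) / h * (y - (i : ℝ) * h) := by
    filter_upwards [Ioo_mem_nhds hx.1 hx.2] with y hy
    exact hu i hi y (Set.Ioo_subset_Icc_self hy)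
  rw [hev.deriv_eq]
  have hd : HasDerivAt (fun y => α i + (α (i + 1) - α i) / h * (y - (i : ℝ) * h))
      ((α (i + 1) - α i) / h) x := by
    simpa using (((hasDerivAt_id x).sub_const ((i : ℝ) * h)).const_mul
      ((α (i + 1) - α i) / h)).const_add (α i)
  exact hd.deriv

lemma deriv_v_cell {n : ℕ} {h : ℝ} (hpos : 0 < h) {φ : ℕ → ℝ → ℝ}
    (hφ : ∀ (j : ℕ) (x : ℝ), φ j x = max 0 (1 - |x - (j : ℝ) * h| / h))
    {B : ℕ → ℝ → ℝ}
    (hB : ∀ i x, B i x = if x ∈ Set.Icc ((i : ℝ) * h) (((i : ℝ) + 1) * h)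
        then 4 * (x - (i : ℝ) * h) * ((((i : ℝ) + 1) * h) - x) / h ^ 2 else 0)
    {β : ℕ → ℝ} {v : ℝ → ℝ}
    (hv : ∀ x, v x = ∑ j ∈ Finset.Icc 1 (n - 1),
        β j * (φ j x + B (j - 1) x - B j x))
    {i : ℕ} (hi : i < n) {x : ℝ} (hx : x ∈ Set.Ioo ((i : ℝ) * h) (((i : ℝ) + 1) * h)) :
    deriv v x = (bpAux n β (i + 1) - bpAux n β i) *
      (5 / h - 8 / h ^ 2 * (x - (i : ℝ) * h)) := by
  have hev : v =ᶠ[nhds x] fun y => bpAux n β i + (bpAux n β (i + 1) - bpAux n β i) *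
      (5 / h * (y - (i : ℝ) * h) - 4 / h ^ 2 * (y - (i : ℝ) * h) ^ 2) := by
    filter_upwards [Ioo_mem_nhds hx.1 hx.2] with y hy
    exact v_cell hpos hφ hB hv hi hy
  rw [hev.deriv_eq]
  have h1 : HasDerivAt (fun y : ℝ => y - (i : ℝ) * h) 1 x := (hasDerivAt_id x).sub_const _
  have hd := ((((h1.const_mul (5 / h)).sub ((h1.pow 2).const_mul (4 / h ^ 2))).const_mul
    (bpAux n β (i + 1) - bpAux n β i)).const_add (bpAux n β i))
  erw [hd.deriv]
  push_cast
  ring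


lemma cell_integral_s15 {a b L : ℝ} (hL : 0 < L) (hb : b = a + L) {f : ℝ → ℝ} (p q r : ℝ)
    (hf : ∀ x ∈ Set.Ioo a b, f x = p + q*(x-a) + r*(x-a)^2) :
    (∫ x in a..b, f x) = p*L + q*L^2/2 + r*L^3/3 ∧ IntervalIntegrable f volume a b := by
  subst hb
  refine ⟨(interval_congr_Ioo (by linarith) hf).trans (integral_quad p q r a L),
    intervalIntegrable_congr_Ioo (by linarith) hf ?_⟩
  exact ((by continuity : Continuous fun x => p + q*(x-a) + r*(x-a)^2).intervalIntegrable _ _)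

theorem upwind_PG_discrete_optimal_norm (n : ℕ) (hn : 1 < n) (h : ℝ) (hh : h = 1 / n)
    (ε : ℝ) (hε : 0 < ε)
    (α : ℕ → ℝ) (hα0 : α 0 = 0) (hαn : α n = 0)
    (u : ℝ → ℝ)
    (hu : ∀ i < n, ∀ x ∈ Set.Icc ((i : ℝ) * h) (((i : ℝ) + 1) * h),
      u x = α i + (α (i + 1) - α i) / h * (x - (i : ℝ) * h))
    (φ : ℕ → ℝ → ℝ)
    (hφ : ∀ (j : ℕ) (x : ℝ), φ j x = max 0 (1 - |x - (j : ℝ) * h| / h))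
    (B : ℕ → ℝ → ℝ)
    (hB : ∀ i x, B i x = if x ∈ Set.Icc ((i : ℝ) * h) (((i : ℝ) + 1) * h)
        then 4 * (x - (i : ℝ) * h) * ((((i : ℝ) + 1) * h) - x) / h ^ 2 else 0) :
    sSup {r : ℝ | ∃ (β : ℕ → ℝ) (v : ℝ → ℝ),
        (∃ j ∈ Finset.Icc 1 (n - 1), β j ≠ 0) ∧
        (∀ x, v x = ∑ j ∈ Finset.Icc 1 (n - 1),
            β j * (φ j x + B (j - 1) x - B j x)) ∧
        r = (ε * (∫ x in (0:ℝ)..1, deriv u x * deriv v x)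
              + ∫ x in (0:ℝ)..1, deriv u x * v x)
            / Real.sqrt (∫ x in (0:ℝ)..1, (deriv v x) ^ 2)}
      = Real.sqrt ((3 / 19) *
          ((ε + 2 * h / 3) ^ 2 * (∫ x in (0:ℝ)..1, (deriv u x) ^ 2)
            + ((1 / h) * ∑ i ∈ Finset.range n,
                (∫ x in ((i : ℝ) * h)..(((i : ℝ) + 1) * h), u x) ^ 2
              - (∫ x in (0:ℝ)..1, u x) ^ 2))) := by
  have hn0 : (n : ℝ) ≠ 0 := Nat.cast_ne_zero.2 (by omega)
  have hnpos : (0:ℝ) < n := by positivity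
  have hpos : 0 < h := by rw [hh]; positivity
  have hne : h ≠ 0 := hpos.ne'
  set e : ℕ → ℝ := fun i => α (i + 1) - α i with he
  set m : ℕ → ℝ := fun i => h * (α i + α (i + 1)) / 2 with hm
  set c : ℝ := ε + 2 * h / 3 with hc
  set g : ℕ → ℝ := fun i => c * e i - m i with hg
  set G : ℝ := (∑ i ∈ Finset.range n, g i) / n with hG
  set S2 : ℝ := ∑ i ∈ Finset.range n, (g i - G) ^ 2 with hS2
  set M0 : ℝ := Real.sqrt ((3 / 19) * ((1 / h) * S2)) with hM0
  have hS2nn : 0 ≤ S2 := Finset.sum_nonneg fun i _ => sq_nonneg _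
  -- adjacent-interval summation helper
  have adj : ∀ (f : ℝ → ℝ) (val : ℕ → ℝ),
      (∀ i, i < n → (∫ x in ((i : ℝ) * h)..(((i : ℝ) + 1) * h), f x) = val i ∧
        IntervalIntegrable f volume ((i : ℝ) * h) (((i : ℝ) + 1) * h)) →
      (∫ x in (0:ℝ)..1, f x) = ∑ i ∈ Finset.range n, val i := by
    intro f val hf
    have hint : ∀ k, k < n → IntervalIntegrable f volume ((k : ℝ) * h) (((k + 1 : ℕ) : ℝ) * h) := by
      intro k hk
      have h2 := (hf k hk).2
      have heq : ((k + 1 : ℕ) : ℝ) * h = ((k : ℝ) + 1) * h := by push_cast; ring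
      rw [heq]
      exact h2
    have key := intervalIntegral.sum_integral_adjacent_intervals
      (a := fun k : ℕ => (k : ℝ) * h) (μ := volume) (f := f) (n := n) hint
    beta_reduce at key
    have h0 : ((0 : ℕ) : ℝ) * h = (0 : ℝ) := by simp
    have h1 : ((n : ℕ) : ℝ) * h = (1 : ℝ) := by rw [hh]; field_simp
    rw [h0, h1] at key
    rw [← key]
    refine Finset.sum_congr rfl fun i hi => ?_
    have : ((i + 1 : ℕ) : ℝ) * h = ((i : ℝ) + 1) * h := by push_cast; ring
    rw [this]
    exact (hf i (Finset.mem_range.1 hi)).1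
  -- integrals of u alone
  have hu4 : ∀ i, i < n → (∫ x in ((i : ℝ) * h)..(((i : ℝ) + 1) * h), (deriv u x) ^ 2)
      = e i ^ 2 / h ∧ IntervalIntegrable (fun x => (deriv u x) ^ 2) volume
        ((i : ℝ) * h) (((i : ℝ) + 1) * h) := by
    intro i hi
    have hcell := cell_integral_s15 (L := h) hpos (by ring : ((i:ℝ)+1)*h = (i:ℝ)*h + h)
      (f := fun x => (deriv u x) ^ 2) (e i ^ 2 / h ^ 2) 0 0 ?_
    · refine ⟨hcell.1.trans ?_, hcell.2⟩
      field_simp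
      ring
    · intro x hx
      beta_reduce
      rw [deriv_u_cell hu hi hx]
      simp only [he]
      field_simp
      ring
  have hu5 : ∀ i, i < n → (∫ x in ((i : ℝ) * h)..(((i : ℝ) + 1) * h), u x)
      = m i ∧ IntervalIntegrable u volume ((i : ℝ) * h) (((i : ℝ) + 1) * h) := by
    intro i hi
    have hcell := cell_integral_s15 (L := h) hpos (by ring : ((i:ℝ)+1)*h = (i:ℝ)*h + h)
      (f := u) (α i) (e i / h) 0 ?_
    · refine ⟨hcell.1.trans ?_, hcell.2⟩
      simp only [hm, he]; field_simp; ring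
    · intro x hx
      rw [hu i hi x (Set.Ioo_subset_Icc_self hx)]
      simp only [he]; ring
  have hintu2 : (∫ x in (0:ℝ)..1, (deriv u x) ^ 2) = (1/h) * ∑ i ∈ Finset.range n, e i ^ 2 := by
    rw [adj _ _ hu4, Finset.mul_sum]
    exact Finset.sum_congr rfl fun i _ => by ring
  have hintu : (∫ x in (0:ℝ)..1, u x) = ∑ i ∈ Finset.range n, m i :=
    adj _ _ fun i hi => ⟨(hu5 i hi).1, (hu5 i hi).2⟩
  -- master computation for any admissible (β, v)
  have master : ∀ (β : ℕ → ℝ) (v : ℝ → ℝ),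
      (∀ x, v x = ∑ j ∈ Finset.Icc 1 (n - 1), β j * (φ j x + B (j - 1) x - B j x)) →
      (ε * (∫ x in (0:ℝ)..1, deriv u x * deriv v x) + ∫ x in (0:ℝ)..1, deriv u x * v x)
        = (1/h) * ∑ i ∈ Finset.range n, g i * (bpAux n β (i+1) - bpAux n β i)
      ∧ (∫ x in (0:ℝ)..1, (deriv v x) ^ 2)
        = (19/(3*h)) * ∑ i ∈ Finset.range n, (bpAux n β (i+1) - bpAux n β i) ^ 2 := by
    intro β v hv
    set d : ℕ → ℝ := fun i => bpAux n β (i+1) - bpAux n β i with hd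
    have hI1 : ∀ i, i < n → (∫ x in ((i : ℝ) * h)..(((i : ℝ) + 1) * h), deriv u x * deriv v x)
        = e i * d i / h ∧ IntervalIntegrable (fun x => deriv u x * deriv v x) volume
          ((i : ℝ) * h) (((i : ℝ) + 1) * h) := by
      intro i hi
      have hcell := cell_integral_s15 (L := h) hpos (by ring : ((i:ℝ)+1)*h = (i:ℝ)*h + h)
        (f := fun x => deriv u x * deriv v x)
        (5 * (e i * d i) / h ^ 2) (-(8 * (e i * d i) / h ^ 3)) 0 ?_
      · refine ⟨hcell.1.trans ?_, hcell.2⟩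
        field_simp; ring
      · intro x hx
        beta_reduce
        rw [deriv_u_cell hu hi hx, deriv_v_cell hpos hφ hB hv hi hx]
        simp only [he, hd]
        field_simp; ring
    have hI2 : ∀ i, i < n → (∫ x in ((i : ℝ) * h)..(((i : ℝ) + 1) * h), deriv u x * v x)
        = e i * bpAux n β i + 7/6 * (e i * d i) ∧
        IntervalIntegrable (fun x => deriv u x * v x) volume
          ((i : ℝ) * h) (((i : ℝ) + 1) * h) := by
      intro i hi
      have hcell := cell_integral_s15 (L := h) hpos (by ring : ((i:ℝ)+1)*h = (i:ℝ)*h + h)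
        (f := fun x => deriv u x * v x)
        (e i * bpAux n β i / h) (5 * (e i * d i) / h ^ 2) (-(4 * (e i * d i) / h ^ 3)) ?_
      · refine ⟨hcell.1.trans ?_, hcell.2⟩
        field_simp; ring
      · intro x hx
        beta_reduce
        rw [deriv_u_cell hu hi hx, v_cell hpos hφ hB hv hi hx]
        simp only [he, hd]
        field_simp; ring
    have hI3 : ∀ i, i < n → (∫ x in ((i : ℝ) * h)..(((i : ℝ) + 1) * h), (deriv v x) ^ 2)
        = 19 * d i ^ 2 / (3 * h) ∧
        IntervalIntegrable (fun x => (deriv v x) ^ 2) volume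
          ((i : ℝ) * h) (((i : ℝ) + 1) * h) := by
      intro i hi
      have hcell := cell_integral_s15 (L := h) hpos (by ring : ((i:ℝ)+1)*h = (i:ℝ)*h + h)
        (f := fun x => (deriv v x) ^ 2)
        (25 * d i ^ 2 / h ^ 2) (-(80 * d i ^ 2 / h ^ 3)) (64 * d i ^ 2 / h ^ 4) ?_
      · refine ⟨hcell.1.trans ?_, hcell.2⟩
        field_simp; ring
      · intro x hx
        beta_reduce
        rw [deriv_v_cell hpos hφ hB hv hi hx]
        simp only [hd]
        field_simp; ring
    have hbpn : bpAux n β n = 0 := by simp only [bpAux]; rw [if_neg (by omega)]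
    have hbp0 : bpAux n β 0 = 0 := by simp only [bpAux]; rw [if_neg (by omega)]
    constructor
    · rw [adj _ _ hI1, adj _ _ hI2]
      have T1 : ∑ i ∈ Finset.range n,
          (e i * bpAux n β i + 1/2 * (e i * d i) + 1/2 * ((α i + α (i+1)) * d i))
          = α n * bpAux n β n - α 0 * bpAux n β 0 := by
        rw [← Finset.sum_range_sub (fun i => α i * bpAux n β i)]
        refine Finset.sum_congr rfl fun i _ => ?_
        simp only [he, hd]; ring
      simp only [hαn, hα0, zero_mul, sub_zero] at T1
      have expand : ∀ i ∈ Finset.range n,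
          ε * (e i * d i / h) + (e i * bpAux n β i + 7/6 * (e i * d i))
          = (1/h) * (g i * d i) + (e i * bpAux n β i + 1/2 * (e i * d i)
            + 1/2 * ((α i + α (i+1)) * d i)) := by
        intro i _
        simp only [hg, hc, hm, he]
        field_simp; ring
      calc ε * ∑ i ∈ Finset.range n, (e i * d i / h)
            + ∑ i ∈ Finset.range n, (e i * bpAux n β i + 7/6 * (e i * d i))
          = ∑ i ∈ Finset.range n, (ε * (e i * d i / h)
              + (e i * bpAux n β i + 7/6 * (e i * d i))) := by
            rw [Finset.mul_sum, ← Finset.sum_add_distrib]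
        _ = ∑ i ∈ Finset.range n, ((1/h) * (g i * d i)
              + (e i * bpAux n β i + 1/2 * (e i * d i) + 1/2 * ((α i + α (i+1)) * d i))) :=
            Finset.sum_congr rfl expand
        _ = (1/h) * ∑ i ∈ Finset.range n, g i * d i := by
            rw [Finset.sum_add_distrib, T1, add_zero, Finset.mul_sum]
    · rw [adj _ _ hI3, Finset.mul_sum]
      refine Finset.sum_congr rfl fun i _ => ?_
      field_simp
      rfl
  -- sum of d is zero for any β
  have hd0 : ∀ β : ℕ → ℝ, ∑ i ∈ Finset.range n, (bpAux n β (i+1) - bpAux n β i) = 0 := by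
    intro β
    rw [Finset.sum_range_sub (fun i => bpAux n β i)]
    simp only [bpAux]
    rw [if_neg (by omega), if_neg (by omega), sub_zero]
  -- upper bound
  have ub : ∀ r ∈ {r : ℝ | ∃ (β : ℕ → ℝ) (v : ℝ → ℝ),
        (∃ j ∈ Finset.Icc 1 (n - 1), β j ≠ 0) ∧
        (∀ x, v x = ∑ j ∈ Finset.Icc 1 (n - 1),
            β j * (φ j x + B (j - 1) x - B j x)) ∧
        r = (ε * (∫ x in (0:ℝ)..1, deriv u x * deriv v x)
              + ∫ x in (0:ℝ)..1, deriv u x * v x)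
            / Real.sqrt (∫ x in (0:ℝ)..1, (deriv v x) ^ 2)}, r ≤ M0 := by
    rintro r ⟨β, v, -, hv, rfl⟩
    obtain ⟨hN, hD⟩ := master β v hv
    rw [hN, hD]
    set d : ℕ → ℝ := fun i => bpAux n β (i+1) - bpAux n β i with hd
    set D2 : ℝ := ∑ i ∈ Finset.range n, d i ^ 2 with hD2
    have hD2nn : 0 ≤ D2 := Finset.sum_nonneg fun i _ => sq_nonneg _
    have hgd : ∑ i ∈ Finset.range n, g i * d i
        = ∑ i ∈ Finset.range n, (g i - G) * d i := by
      have : ∑ i ∈ Finset.range n, (g i * d i - (g i - G) * d i)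
          = G * ∑ i ∈ Finset.range n, d i := by
        rw [Finset.mul_sum]
        exact Finset.sum_congr rfl fun i _ => by ring
      rw [hd0 β, mul_zero] at this
      rw [Finset.sum_sub_distrib] at this
      linarith
    have CS : (∑ i ∈ Finset.range n, (g i - G) * d i) ^ 2 ≤ S2 * D2 :=
      Finset.sum_mul_sq_le_sq_mul_sq _ _ _
    set X : ℝ := ∑ i ∈ Finset.range n, (g i - G) * d i with hX
    rw [hgd]
    have hXle : X ≤ Real.sqrt (S2 * D2) := by
      calc X ≤ |X| := le_abs_self X
        _ = Real.sqrt (X ^ 2) := (Real.sqrt_sq_eq_abs X).symm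
        _ ≤ Real.sqrt (S2 * D2) := Real.sqrt_le_sqrt CS
    have hprod : M0 * Real.sqrt (19/(3*h) * D2) = (1/h) * Real.sqrt (S2 * D2) := by
      have e1 : M0 * Real.sqrt (19/(3*h) * D2)
          = Real.sqrt ((3/19 * (1/h * S2)) * (19/(3*h) * D2)) := by
        rw [hM0]
        exact (Real.sqrt_mul (mul_nonneg (by norm_num)
          (mul_nonneg (by positivity) hS2nn)) _).symm
      have e2 : (1/h) * Real.sqrt (S2 * D2) = Real.sqrt ((1/h^2) * (S2 * D2)) := by
        rw [Real.sqrt_mul (by positivity : (0:ℝ) ≤ 1/h^2) (S2 * D2)]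
        congr 1
        rw [one_div (h^2), Real.sqrt_inv, Real.sqrt_sq hpos.le, one_div]
      rw [e1, e2]
      congr 1
      field_simp
    rcases eq_or_lt_of_le hD2nn with hD20 | hD2pos
    · have hX0 : X = 0 := by
        have : X ^ 2 ≤ 0 := by rw [← hD20] at CS; simpa using CS
        nlinarith [sq_nonneg X]
      rw [hX0, mul_zero, zero_div]
      exact Real.sqrt_nonneg _
    · have hsq : 0 < Real.sqrt (19/(3*h) * D2) := by
        apply Real.sqrt_pos.2
        apply mul_pos (by positivity) hD2pos
      rw [div_le_iff₀ hsq]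
      calc (1/h) * X ≤ (1/h) * Real.sqrt (S2 * D2) := by
            apply mul_le_mul_of_nonneg_left hXle (by positivity)
        _ = M0 * Real.sqrt (19/(3*h) * D2) := hprod.symm
  -- membership of M0
  have mem : M0 ∈ {r : ℝ | ∃ (β : ℕ → ℝ) (v : ℝ → ℝ),
        (∃ j ∈ Finset.Icc 1 (n - 1), β j ≠ 0) ∧
        (∀ x, v x = ∑ j ∈ Finset.Icc 1 (n - 1),
            β j * (φ j x + B (j - 1) x - B j x)) ∧
        r = (ε * (∫ x in (0:ℝ)..1, deriv u x * deriv v x)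
              + ∫ x in (0:ℝ)..1, deriv u x * v x)
            / Real.sqrt (∫ x in (0:ℝ)..1, (deriv v x) ^ 2)} := by
    rcases eq_or_lt_of_le hS2nn with hS20 | hS2pos
    · -- degenerate case: all g i = G, everything is 0
      set β1 : ℕ → ℝ := fun j => if j = 1 then 1 else 0 with hβ1
      refine ⟨β1,
        fun x => ∑ j ∈ Finset.Icc 1 (n - 1), β1 j * (φ j x + B (j - 1) x - B j x),
        ⟨1, Finset.mem_Icc.2 (by omega), by simp [hβ1]⟩, fun x => rfl, ?_⟩
      obtain ⟨hN, hD⟩ := master β1 _ (fun x => rfl)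
      rw [hN, hD]
      have hgG : ∀ i ∈ Finset.range n, g i = G := by
        intro i hi
        have h3 := (Finset.sum_eq_zero_iff_of_nonneg
          (fun i _ => sq_nonneg (g i - G))).1 hS20.symm i hi
        have h4 := sq_eq_zero_iff.1 h3
        linarith
      have hnum : ∑ i ∈ Finset.range n, g i * (bpAux n β1 (i+1) - bpAux n β1 i) = 0 := by
        have h5 := hd0 β1
        calc ∑ i ∈ Finset.range n, g i * (bpAux n β1 (i+1) - bpAux n β1 i)
            = G * ∑ i ∈ Finset.range n, (bpAux n β1 (i+1) - bpAux n β1 i) := by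
              rw [Finset.mul_sum]
              exact Finset.sum_congr rfl fun i hi => by rw [hgG i hi]
          _ = 0 := by rw [h5, mul_zero]
      rw [hnum, mul_zero, zero_div, hM0, ← hS20]
      simp
    · -- attainment case
      set β : ℕ → ℝ := fun j => ∑ k ∈ Finset.range j, (g k - G) with hβ
      have hbp : ∀ j, j ≤ n → bpAux n β j = ∑ k ∈ Finset.range j, (g k - G) := by
        intro j hj
        by_cases hj1 : 1 ≤ j ∧ j ≤ n - 1
        · simp only [bpAux]; rw [if_pos hj1]
        · have : j = 0 ∨ j = n := by omega
          rcases this with rfl | rfl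
          · simp [bpAux]
          · simp only [bpAux]
            rw [if_neg (by omega)]
            rw [Finset.sum_sub_distrib, Finset.sum_const, Finset.card_range,
              nsmul_eq_mul, hG]
            field_simp
            ring
      have hdeq : ∀ i, i < n → bpAux n β (i+1) - bpAux n β i = g i - G := by
        intro i hi
        rw [hbp (i+1) (by omega), hbp i (by omega), Finset.sum_range_succ]
        ring
      refine ⟨β, fun x => ∑ j ∈ Finset.Icc 1 (n - 1),
          β j * (φ j x + B (j - 1) x - B j x), ?_, fun x => rfl, ?_⟩
      · by_contra hcon
        push_neg at hcon
        have hβ0 : ∀ j, bpAux n β j = 0 := by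
          intro j
          by_cases hj1 : 1 ≤ j ∧ j ≤ n - 1
          · simp only [bpAux]
            rw [if_pos hj1]
            exact hcon j (Finset.mem_Icc.2 hj1)
          · simp only [bpAux]; rw [if_neg hj1]
        have : S2 = 0 := by
          rw [hS2]
          apply Finset.sum_eq_zero
          intro i hi
          have := hdeq i (Finset.mem_range.1 hi)
          rw [hβ0, hβ0, sub_zero] at this
          rw [← this]
          norm_num
        linarith
      · obtain ⟨hN, hD⟩ := master β _ (fun x => rfl)
        rw [hN, hD]
        have hnum : ∑ i ∈ Finset.range n, g i * (bpAux n β (i+1) - bpAux n β i) = S2 := by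
          have step : ∀ i ∈ Finset.range n,
              g i * (bpAux n β (i+1) - bpAux n β i)
              = (g i - G)^2 + G * (bpAux n β (i+1) - bpAux n β i) := by
            intro i hi
            rw [hdeq i (Finset.mem_range.1 hi)]
            ring
          rw [Finset.sum_congr rfl step, Finset.sum_add_distrib, ← Finset.mul_sum,
            hd0 β, mul_zero, add_zero, hS2]
        have hden : ∑ i ∈ Finset.range n, (bpAux n β (i+1) - bpAux n β i) ^ 2 = S2 := by
          rw [hS2]
          exact Finset.sum_congr rfl fun i hi => by rw [hdeq i (Finset.mem_range.1 hi)]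
        rw [hnum, hden]
        have hsq : 0 < Real.sqrt (19/(3*h) * S2) :=
          Real.sqrt_pos.2 (mul_pos (by positivity) hS2pos)
        rw [eq_div_iff hsq.ne']
        rw [hM0, ← Real.sqrt_mul (by positivity)]
        have : 3 / 19 * (1 / h * S2) * (19 / (3 * h) * S2) = ((1/h) * S2)^2 := by
          field_simp
        rw [this, Real.sqrt_sq (by positivity)]
  -- final identity for the right-hand side
  have hRHS : Real.sqrt ((3 / 19) *
      ((ε + 2 * h / 3) ^ 2 * (∫ x in (0:ℝ)..1, (deriv u x) ^ 2)
        + ((1 / h) * ∑ i ∈ Finset.range n,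
            (∫ x in ((i : ℝ) * h)..(((i : ℝ) + 1) * h), u x) ^ 2
          - (∫ x in (0:ℝ)..1, u x) ^ 2))) = M0 := by
    rw [hintu2, hintu]
    have hsum : ∑ i ∈ Finset.range n,
        (∫ x in ((i : ℝ) * h)..(((i : ℝ) + 1) * h), u x) ^ 2
        = ∑ i ∈ Finset.range n, m i ^ 2 :=
      Finset.sum_congr rfl fun i hi => by rw [(hu5 i (Finset.mem_range.1 hi)).1]
    rw [hsum, hM0]
    congr 1
    -- algebraic identity
    have hsum_e : ∑ i ∈ Finset.range n, e i = 0 := by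
      have := Finset.sum_range_sub α n
      simp only [he]
      rw [this, hαn, hα0, sub_zero]
    have hsum_em : ∑ i ∈ Finset.range n, e i * m i = 0 := by
      have h2 : ∀ i ∈ Finset.range n, e i * m i
          = h * (α (i+1))^2 / 2 - h * (α i)^2 / 2 := by
        intro i _
        simp only [he, hm]
        ring
      rw [Finset.sum_congr rfl h2, Finset.sum_range_sub (fun i => h * (α i)^2 / 2),
        hαn, hα0]
      norm_num
    have hsum_g : ∑ i ∈ Finset.range n, g i = - ∑ i ∈ Finset.range n, m i := by
      have : ∀ i ∈ Finset.range n, g i = c * e i - m i := fun i _ => by simp only [hg]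
      rw [Finset.sum_congr rfl this, Finset.sum_sub_distrib, ← Finset.mul_sum, hsum_e,
        mul_zero, zero_sub]
    have hsum_g2 : ∑ i ∈ Finset.range n, g i ^ 2
        = c^2 * ∑ i ∈ Finset.range n, e i ^ 2 + ∑ i ∈ Finset.range n, m i ^ 2 := by
      have : ∀ i ∈ Finset.range n, g i ^ 2
          = c^2 * e i ^ 2 - 2 * c * (e i * m i) + m i ^ 2 := by
        intro i _; simp only [hg]; ring
      rw [Finset.sum_congr rfl this, Finset.sum_add_distrib, Finset.sum_sub_distrib,
        ← Finset.mul_sum, ← Finset.mul_sum, hsum_em, mul_zero, sub_zero]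
    have hnh : (n:ℝ) * h = 1 := by rw [hh]; field_simp
    have hGh : G = (∑ i ∈ Finset.range n, g i) * h := by
      rw [hG, div_eq_mul_one_div, ← hh]
    have hS2eq : S2 = (∑ i ∈ Finset.range n, g i ^ 2)
        - h * (∑ i ∈ Finset.range n, g i)^2 := by
      have h2 : ∀ i ∈ Finset.range n, (g i - G)^2
          = g i ^ 2 - 2 * G * g i + G^2 := fun i _ => by ring
      rw [hS2, Finset.sum_congr rfl h2, Finset.sum_add_distrib, Finset.sum_sub_distrib,
        ← Finset.mul_sum, Finset.sum_const, Finset.card_range, nsmul_eq_mul, hGh]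
      linear_combination (h * (∑ i ∈ Finset.range n, g i)^2) * hnh
    rw [hS2eq, hsum_g2, hsum_g]
    field_simp
    ring
  rw [hRHS]
  exact le_antisymm (csSup_le ⟨M0, mem⟩ ub) (le_csSup ⟨M0, fun r hr => ub r hr⟩ mem)
end
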